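/- Kähler identity on linear algebra level: on the space of (p,q)-forms on an n-dimensional Hermitian complex vector space, the commutator of the adjoint Λ of the Lefschetz operator λ (wedging with the fundamental form ω) satisfies [λ, Λ] = (p + q − n)·id, equivalently [Λ, λ] = (n − (p+q))·id on Ω^{p,q}. -/
import Mathlib


open Finset

/-- The space of forms on an `n`-dimensional Hermitian vector space, in the monomial
model: a form is a coefficient function on pairs `(S, T)` of index sets (`dz_S ∧ dz̄_T`);
a `(p,q)`-form is one supported on `|S| = p`, `|T| = q`. -/
abbrev MonomialForm (n : ℕ) : Type := Finset (Fin n) × Finset (Fin n) → ℂ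

/-- The Lefschetz operator `λ`: wedging with the fundamental form `ω = Σᵢ dzᵢ ∧ dz̄ᵢ`. -/
noncomputable def lef {n : ℕ} (x : MonomialForm n) : MonomialForm n :=
  fun ST => ∑ i ∈ ST.1 ∩ ST.2, x (ST.1.erase i, ST.2.erase i)

/-- The dual Lefschetz operator `Λ` (contraction with the fundamental form). -/
noncomputable def lefDual {n : ℕ} (x : MonomialForm n) : MonomialForm n :=
  fun ST => ∑ i ∈ (ST.1 ∪ ST.2)ᶜ, x (insert i ST.1, insert i ST.2)

/-- The Hermitian inner product on forms for which the monomials are orthonormal. -/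
noncomputable def formInner {n : ℕ} (x y : MonomialForm n) : ℂ :=
  ∑ ST : Finset (Fin n) × Finset (Fin n), starRingEnd ℂ (x ST) * y ST

/-- Kähler identity at the linear-algebra level: `Λ` is the adjoint of the Lefschetz
operator `λ` with respect to the induced Hermitian inner product, and on `(p,q)`-forms
on an `n`-dimensional Hermitian vector space, `[Λ, λ] = (n − (p+q))·id` (equivalently
`[λ, Λ] = (p + q − n)·id`). -/
theorem lefschetz_commutator {n p q : ℕ} (x : MonomialForm n)
    (hx : ∀ ST, x ST ≠ 0 → ST.1.card = p ∧ ST.2.card = q) :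
    (∀ y : MonomialForm n, formInner (lef x) y = formInner x (lefDual y)) ∧
    (∀ ST, lefDual (lef x) ST - lef (lefDual x) ST
        = ((n : ℂ) - ((p : ℂ) + (q : ℂ))) * x ST) := by
  constructor
  · intro y
    unfold formInner lef lefDual
    simp only [map_sum, Finset.sum_mul, Finset.mul_sum]
    rw [Finset.sum_sigma', Finset.sum_sigma']
    refine Finset.sum_nbij'
      (fun s => ⟨(s.1.1.erase s.2, s.1.2.erase s.2), s.2⟩)
      (fun s => ⟨(insert s.2 s.1.1, insert s.2 s.1.2), s.2⟩)
      ?_ ?_ ?_ ?_ ?_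
    · rintro ⟨⟨S, T⟩, i⟩ h
      simp only [Finset.mem_sigma, Finset.mem_univ, true_and, Finset.mem_inter] at h ⊢
      simp
    · rintro ⟨⟨S, T⟩, i⟩ h
      simp only [Finset.mem_sigma, Finset.mem_univ, true_and, Finset.mem_compl,
        Finset.mem_union, not_or] at h ⊢
      simp
    · rintro ⟨⟨S, T⟩, i⟩ h
      simp only [Finset.mem_sigma, Finset.mem_univ, true_and, Finset.mem_inter] at h
      simp [Finset.insert_erase h.1, Finset.insert_erase h.2]
    · rintro ⟨⟨S, T⟩, i⟩ h
      simp only [Finset.mem_sigma, Finset.mem_univ, true_and, Finset.mem_compl,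
        Finset.mem_union, not_or] at h
      simp [Finset.erase_insert h.1, Finset.erase_insert h.2]
    · rintro ⟨⟨S, T⟩, i⟩ h
      simp only [Finset.mem_sigma, Finset.mem_univ, true_and, Finset.mem_inter] at h
      simp [Finset.insert_erase h.1, Finset.insert_erase h.2]
  · rintro ⟨S, T⟩
    simp only [lef, lefDual]
    have hA : ∀ i ∈ (S ∪ T)ᶜ,
        (∑ j ∈ (insert i S) ∩ (insert i T),
            x ((insert i S).erase j, (insert i T).erase j))
        = x (S, T) + ∑ j ∈ S ∩ T, x (insert i (S.erase j), insert i (T.erase j)) := by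
      intro i hi
      simp only [Finset.mem_compl, Finset.mem_union, not_or] at hi
      have hint : (insert i S) ∩ (insert i T) = insert i (S ∩ T) := by
        ext j; simp only [Finset.mem_inter, Finset.mem_insert]; tauto
      rw [hint, Finset.sum_insert (by simp [hi.1])]
      congr 1
      · rw [Finset.erase_insert hi.1, Finset.erase_insert hi.2]
      · refine Finset.sum_congr rfl fun j hj => ?_
        have hj' := Finset.mem_inter.mp hj
        have hij : i ≠ j := fun h => hi.1 (h ▸ hj'.1)
        rw [Finset.erase_insert_of_ne hij, Finset.erase_insert_of_ne hij]
    have hB : ∀ j ∈ S ∩ T,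
        (∑ i ∈ ((S.erase j) ∪ (T.erase j))ᶜ,
            x (insert i (S.erase j), insert i (T.erase j)))
        = x (S, T) + ∑ i ∈ (S ∪ T)ᶜ, x (insert i (S.erase j), insert i (T.erase j)) := by
      intro j hj
      have hj' := Finset.mem_inter.mp hj
      have hc : ((S.erase j) ∪ (T.erase j))ᶜ = insert j (S ∪ T)ᶜ := by
        ext i
        by_cases hij : i = j
        · subst hij; simp [hj'.1]
        · simp only [Finset.mem_compl, Finset.mem_union, Finset.mem_erase, Finset.mem_insert,
            not_or, hij, false_or, ne_eq, not_false_eq_true, true_and]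
      rw [hc, Finset.sum_insert (by simp [hj'.1])]
      congr 1
      rw [Finset.insert_erase hj'.1, Finset.insert_erase hj'.2]
    rw [Finset.sum_congr rfl hA, Finset.sum_congr rfl hB,
      Finset.sum_add_distrib, Finset.sum_add_distrib, Finset.sum_comm,
      Finset.sum_const, Finset.sum_const, nsmul_eq_mul, nsmul_eq_mul,
      add_sub_add_right_eq_sub, ← sub_mul]
    by_cases hx0 : x (S, T) = 0
    · simp [hx0]
    · obtain ⟨hS, hT⟩ := hx (S, T) hx0
      congr 1
      have hu : (S ∪ T).card ≤ n := by
        simpa using Finset.card_le_univ (S ∪ T)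
      have hcard : (S ∪ T).card + (S ∩ T).card = p + q := by
        rw [Finset.card_union_add_card_inter, hS, hT]
      rw [Finset.card_compl, Fintype.card_fin, Nat.cast_sub hu]
      have : ((S ∪ T).card : ℂ) + ((S ∩ T).card : ℂ) = (p : ℂ) + q := by
        exact_mod_cast hcard
      linear_combination -this
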